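/- arXiv:2206.12635 — 2 statements merged into one kernel-verified Lean document; each statement's English description precedes it below -/
import Mathlib

section
/- Take r = 1/5 (so x = √24/10, y = 1/10) and let Λ be the subgroup of ℤ² generated by (3, −2) and (1, 2), which has index 8 in ℤ². Then the separation of the induced 8-colouring of the tiles T(i, j) equals 7/5: any two distinct same-coloured tiles are at distance at least 7/5 from each other, and this value is attained. (In particular d(8) ≥ 7/5, improving the previously reported bound 1.37542.) -/
noncomputable section

/-- The Euclidean plane ℝ². -/
abbrev Plane := EuclideanSpace ℝ (Fin 2)

/-- The point (a, b) of the Euclidean plane. -/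
def pt (a b : ℝ) : Plane := !₂[a, b]

/-- The semi-regular hexagon K(r): with y = r/2 and x = √(1 − r²)/2, the closed convex
hull of the six points (0, 1/2), (x, y), (x, −y), (0, −1/2), (−x, −y), (−x, y). -/
def hexK (r : ℝ) : Set Plane :=
  convexHull ℝ
    {pt 0 (1 / 2), pt (Real.sqrt (1 - r ^ 2) / 2) (r / 2),
      pt (Real.sqrt (1 - r ^ 2) / 2) (-(r / 2)), pt 0 (-(1 / 2)),
      pt (-(Real.sqrt (1 - r ^ 2) / 2)) (-(r / 2)),
      pt (-(Real.sqrt (1 - r ^ 2) / 2)) (r / 2)}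

/-- The center c(i, j) = ((2i + j)·x, j·(y + 1/2)) of the tile with index (i, j). -/
def center (r : ℝ) (i j : ℤ) : Plane :=
  pt ((2 * (i : ℝ) + (j : ℝ)) * (Real.sqrt (1 - r ^ 2) / 2)) ((j : ℝ) * (r / 2 + 1 / 2))

/-- The tile T(i, j) = c(i, j) + K(r). -/
def tile (r : ℝ) (i j : ℤ) : Set Plane :=
  (fun p => center r i j + p) '' hexK r

/-- The set of distances realized by points in two distinct same-coloured tiles,
for the colouring of the tiles T(i, j) by the cosets of a subgroup Λ ≤ ℤ²:
tiles T(i, j) and T(i', j') get the same colour iff (i − i', j − j') ∈ Λ.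
The separation of the colouring is the infimum of this set. -/
def sameColourDists (r : ℝ) (Λ : AddSubgroup (ℤ × ℤ)) : Set ℝ :=
  {d : ℝ | ∃ (i j i' j' : ℤ) (p q : Plane),
    (i, j) ≠ (i', j') ∧ (i - i', j - j') ∈ Λ ∧
    p ∈ tile r i j ∧ q ∈ tile r i' j' ∧ d = dist p q}

end

/-!
Two same-coloured tiles are `c + u` and `c' + v` with `u, v ∈ K`, and over `Λ` the centre
difference `c − c'` is `(4s·x, 6t/5)` with `s + t` even and `(s, t) ≠ 0`, where `x = √6/5`.
The difference `u − v` lies in the polygon `|w₀| ≤ 2x`, `|w₁| ≤ 1`, `|2x·w₀ ± w₁| ≤ 29/25`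
(each bound is read off the vertices of `K`). If `|s| ≥ 2` or `|t| ≥ 2`, one coordinate of
`c − c' + u − v` alone exceeds `7/5`. For `s, t = ±1`, expanding the square gives
`|c − c' + u − v|² ≥ 107/25 − 2·(29/25) = (7/5)²`, with equality for the bottom vertex of
`T(0, 0)` and the top vertex of `T(2, −4)`. Finally `Λ` is the kernel of
`(a, b) ↦ b − 2a mod 8`, so it has index 8.
-/

local notation "x₀" => Real.sqrt (1 - (1 / 5 : ℝ) ^ 2) / 2

abbrev Λ₈ : AddSubgroup (ℤ × ℤ) := AddSubgroup.closure {(3, -2), (1, 2)}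

theorem sq_x₀ : x₀ ^ 2 = 6 / 25 := by
  rw [div_pow, Real.sq_sqrt (by norm_num)]
  norm_num

theorem x₀_pos : 0 < x₀ := by
  have : 0 < Real.sqrt (1 - (1 / 5 : ℝ) ^ 2) := Real.sqrt_pos.mpr (by norm_num)
  positivity

theorem dist_eq_sqrt_coord (p q : Plane) : dist p q = √((p 0 - q 0) ^ 2 + (p 1 - q 1) ^ 2) := by
  simp only [EuclideanSpace.dist_eq, Fin.sum_univ_two, Real.dist_eq, sq_abs]

theorem sq_le_sq_add_of_le_abs_sub {a p q : ℝ} (ha : 0 ≤ a) (h : a ≤ |p| - |q|) :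
    a ^ 2 ≤ (p + q) ^ 2 :=
  sq_le_sq.mpr ((abs_of_nonneg ha).trans_le (h.trans (abs_sub_abs_le_abs_add p q)))

/-- `K(1/5)` is centrally symmetric, so three of its vertices control `|a·u₀ + b·u₁|`. -/
theorem abs_le_of_mem_hexK {a b c : ℝ} (h₁ : |b / 2| ≤ c) (h₂ : |a * x₀ + b / 10| ≤ c)
    (h₃ : |a * x₀ - b / 10| ≤ c) {u : Plane} (hu : u ∈ hexK (1 / 5)) :
    |a * u 0 + b * u 1| ≤ c := by
  let f : Plane →ₗ[ℝ] ℝ := a • (EuclideanSpace.proj 0 : Plane →L[ℝ] ℝ).toLinearMap +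
    b • (EuclideanSpace.proj 1 : Plane →L[ℝ] ℝ).toLinearMap
  have hconv : Convex ℝ (f ⁻¹' Set.Icc (-c) c) := (convex_Icc (-c) c).linear_preimage f
  refine abs_le.mpr (convexHull_min ?_ hconv hu)
  generalize x₀ = x at h₂ h₃
  simp only [Set.insert_subset_iff, Set.singleton_subset_iff, Set.mem_preimage, Set.mem_Icc, f,
    LinearMap.add_apply, LinearMap.smul_apply, ContinuousLinearMap.coe_coe,
    PiLp.proj_apply, pt, Matrix.cons_val_zero, Matrix.cons_val_one, Matrix.cons_val_fin_one,
    smul_eq_mul]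
  rw [abs_le] at h₁ h₂ h₃
  repeat' constructor
  all_goals linarith

theorem abs_sub_le_of_mem_hexK {a b c : ℝ} (h₁ : |b / 2| ≤ c) (h₂ : |a * x₀ + b / 10| ≤ c)
    (h₃ : |a * x₀ - b / 10| ≤ c) {u v : Plane} (hu : u ∈ hexK (1 / 5)) (hv : v ∈ hexK (1 / 5)) :
    |a * (u - v) 0 + b * (u - v) 1| ≤ 2 * c := by
  have hsplit : a * (u - v) 0 + b * (u - v) 1 = (a * u 0 + b * u 1) - (a * v 0 + b * v 1) := by
    simp only [PiLp.sub_apply]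
    ring
  rw [hsplit, two_mul]
  exact (abs_sub _ _).trans
    (add_le_add (abs_le_of_mem_hexK h₁ h₂ h₃ hu) (abs_le_of_mem_hexK h₁ h₂ h₃ hv))

def diffPolygon : Set Plane :=
  {w | |w 0| ≤ 2 * x₀ ∧ |w 1| ≤ 1 ∧ |2 * x₀ * w 0 + w 1| ≤ 29 / 25 ∧ |2 * x₀ * w 0 - w 1| ≤ 29 / 25}

theorem sub_mem_diffPolygon {u v : Plane} (hu : u ∈ hexK (1 / 5)) (hv : v ∈ hexK (1 / 5)) :
    u - v ∈ diffPolygon := by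
  have h₀ := abs_sub_le_of_mem_hexK (a := 1) (b := 0) (c := x₀) ?_ ?_ ?_ hu hv
  have h₁ := abs_sub_le_of_mem_hexK (a := 0) (b := 1) (c := 1 / 2) ?_ ?_ ?_ hu hv
  have hp := abs_sub_le_of_mem_hexK (a := 2 * x₀) (b := 1) (c := 29 / 50) ?_ ?_ ?_ hu hv
  have hm := abs_sub_le_of_mem_hexK (a := 2 * x₀) (b := -1) (c := 29 / 50) ?_ ?_ ?_ hu hv
  · refine ⟨?_, ?_, ?_, ?_⟩
    · convert h₀ using 1; ring_nf
    · convert h₁ using 1 <;> ring_nf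
    · convert hp using 1 <;> ring_nf
    · convert hm using 1 <;> ring_nf
  all_goals rw [abs_le]; constructor <;> nlinarith [sq_x₀, x₀_pos]

theorem seven_fifths_sq_le {w : Plane} (hw : w ∈ diffPolygon) {s t : ℤ} (hst : Even (s + t))
    (hne : s ≠ 0 ∨ t ≠ 0) : (7 / 5) ^ 2 ≤ (4 * s * x₀ + w 0) ^ 2 + (6 * t / 5 + w 1) ^ 2 := by
  obtain ⟨h₀, h₁, hp, hm⟩ := hw
  have hcases : 2 ≤ |s| ∨ 2 ≤ |t| ∨ (s = 1 ∨ s = -1) ∧ (t = 1 ∨ t = -1) := by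
    obtain ⟨k, hk⟩ := hst
    rw [le_abs, le_abs]
    omega
  rcases hcases with hs | ht | ⟨hs | hs, ht | ht⟩
  · have hs' : (2 : ℝ) ≤ |(s : ℝ)| := by exact_mod_cast hs
    have hfar : (7 / 5) ^ 2 ≤ (4 * s * x₀ + w 0) ^ 2 := by
      refine sq_le_sq_add_of_le_abs_sub (by norm_num) ?_
      rw [abs_mul, abs_mul, abs_of_pos x₀_pos]
      nlinarith [sq_x₀, x₀_pos]
    nlinarith [sq_nonneg (6 * t / 5 + w 1)]
  · have ht' : (2 : ℝ) ≤ |(t : ℝ)| := by exact_mod_cast ht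
    have hfar : (7 / 5) ^ 2 ≤ (6 * t / 5 + w 1) ^ 2 := by
      refine sq_le_sq_add_of_le_abs_sub (by norm_num) ?_
      rw [abs_div, abs_mul, abs_of_pos (by norm_num : (0 : ℝ) < 6),
        abs_of_pos (by norm_num : (0 : ℝ) < 5)]
      linarith
    nlinarith [sq_nonneg (4 * s * x₀ + w 0)]
  all_goals
    subst hs ht
    rw [abs_le] at hp hm
    push_cast
    nlinarith [sq_nonneg (2 * x₀ + w 0), sq_nonneg (2 * x₀ - w 0), sq_nonneg (1 / 5 + w 1),
      sq_nonneg (1 / 5 - w 1), sq_x₀]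

theorem seven_fifths_le_dist {i j i' j' : ℤ} {p q : Plane} (hne : (i, j) ≠ (i', j'))
    (hΛ : (i - i', j - j') ∈ Λ₈) (hp : p ∈ tile (1 / 5) i j) (hq : q ∈ tile (1 / 5) i' j') :
    7 / 5 ≤ dist p q := by
  obtain ⟨u, hu, rfl⟩ := hp
  obtain ⟨v, hv, rfl⟩ := hq
  obtain ⟨m, n, hmn⟩ := AddSubgroup.mem_closure_pair.mp hΛ
  simp only [Prod.ext_iff, Prod.fst_add, Prod.snd_add, Prod.smul_fst, Prod.smul_snd,
    smul_eq_mul, mul_one] at hmn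
  have hi : (i : ℝ) - i' = m * 3 + n := by exact_mod_cast hmn.1.symm
  have hj : (j : ℝ) - j' = m * -2 + n * 2 := by exact_mod_cast hmn.2.symm
  rw [dist_eq_sqrt_coord, Real.le_sqrt (by norm_num) (by positivity)]
  convert seven_fifths_sq_le (sub_mem_diffPolygon hu hv) (s := m + n) (t := n - m)
    ⟨n, by ring⟩ (by rw [Ne, Prod.mk.injEq] at hne; omega) using 3
  · simp only [center, pt, PiLp.add_apply, PiLp.sub_apply, Matrix.cons_val_zero]
    push_cast
    linear_combination x₀ * (2 * hi + hj)
  · simp only [center, pt, PiLp.add_apply, PiLp.sub_apply, Matrix.cons_val_one,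
      Matrix.cons_val_fin_one]
    push_cast
    linear_combination 3 / 5 * hj

theorem seven_fifths_mem_sameColourDists : 7 / 5 ∈ sameColourDists (1 / 5) Λ₈ := by
  refine ⟨0, 0, 2, -4, center (1 / 5) 0 0 + pt 0 (-(1 / 2)), center (1 / 5) 2 (-4) + pt 0 (1 / 2),
    by decide, AddSubgroup.mem_closure_pair.mpr ⟨-1, 1, by decide⟩,
    ⟨_, subset_convexHull ℝ _ (by simp), rfl⟩, ⟨_, subset_convexHull ℝ _ (by simp), rfl⟩, ?_⟩
  rw [dist_eq_sqrt_coord, eq_comm, Real.sqrt_eq_iff_mul_self_eq_of_pos (by norm_num)]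
  simp only [center, pt, PiLp.add_apply, Matrix.cons_val_zero, Matrix.cons_val_one,
    Matrix.cons_val_fin_one]
  push_cast
  ring

def mod8Hom : ℤ × ℤ →+ ZMod 8 :=
  AddMonoidHom.mk' (fun z => ((z.2 - 2 * z.1 : ℤ) : ZMod 8)) fun z z' => by
    simp only [Prod.fst_add, Prod.snd_add]
    push_cast
    ring

theorem Λ₈_eq_ker : Λ₈ = mod8Hom.ker := by
  apply le_antisymm
  · rw [AddSubgroup.closure_le]
    rintro z (rfl | rfl) <;> rfl
  · intro z hz
    obtain ⟨k, hk⟩ := (ZMod.intCast_zmod_eq_zero_iff_dvd _ 8).mp hz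
    refine AddSubgroup.mem_closure_pair.mpr ⟨-k, z.1 + 3 * k, ?_⟩
    ext <;> simp only [Prod.fst_add, Prod.snd_add, Prod.smul_fst, Prod.smul_snd, smul_eq_mul] <;>
      omega

theorem index_Λ₈ : Λ₈.index = 8 := by
  have hsurj : Function.Surjective mod8Hom := fun c => ⟨(0, c.cast), by simp [mod8Hom]⟩
  rw [Λ₈_eq_ker, ← AddMonoidHom.comap_bot, AddSubgroup.index_comap_of_surjective _ hsurj,
    AddSubgroup.index_bot, Nat.card_zmod]

/-- with r = 1/5 and Λ = ⟨(3, -2), (1, 2)⟩ ≤ ℤ² of index 8,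
the separation of the induced 8-colouring of the tiles T(i, j) equals the stated
value, and this value is attained. -/
theorem statement9 :
    (AddSubgroup.closure {(((3) : ℤ), ((-2) : ℤ)), (((1) : ℤ), ((2) : ℤ))}).index = 8 ∧
    IsLeast
      (sameColourDists (1 / 5)
        (AddSubgroup.closure {(((3) : ℤ), ((-2) : ℤ)), (((1) : ℤ), ((2) : ℤ))}))
      ((7 : ℝ) / 5) := by
  refine ⟨index_Λ₈, seven_fifths_mem_sameColourDists, ?_⟩
  rintro d ⟨i, j, i', j', p, q, hne, hΛ, hp, hq, rfl⟩
  exact seven_fifths_le_dist hne hΛ hp hq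
end

section
/- Take r = 1/3 (so x = √2/3, y = 1/6) and let Λ be the subgroup of ℤ² generated by (5, −2) and (1, 4), which has index 22 in ℤ². Then the separation of the induced 22-colouring of the tiles T(i, j) equals 3, and this value is attained. -/
open Real
open scoped RealInnerProductSpace

/-!
Λ is the kernel of `(m, n) ↦ 4m − n mod 22`. The centre offset `c(m, n)` has squared length
`(2/9)((2m + n)² + 2n²)`, and a finite check shows that this is at least `16` on every nonzero
vector of Λ except `±(1, 4)`; since K(1/3) has diameter 1, such tiles are at distance `≥ 3`.
For the neighbours `±(1, 4)` one projects instead onto the unit vector `u = (4√2/9, 7/9)`: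
the centres are `104/27` apart in that direction while K(1/3) has half-width `23/54`, leaving
exactly `3`, which is attained by a pair of opposite vertices.
-/

section ColourLattice

def colourMap : ℤ × ℤ →+ ZMod 22 :=
  AddMonoidHom.mk' (fun p => ((4 * p.1 - p.2 : ℤ) : ZMod 22)) (fun a b => by
    simp only [Prod.fst_add, Prod.snd_add]; push_cast; ring)

lemma colourMap_surjective : Function.Surjective colourMap := fun c =>
  ⟨(0, -(c.cast : ℤ)), by simp [colourMap]⟩

lemma closure_eq_ker_colourMap :
    AddSubgroup.closure {((5 : ℤ), (-2 : ℤ)), ((1 : ℤ), (4 : ℤ))} = colourMap.ker := by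
  apply le_antisymm
  · rw [AddSubgroup.closure_le]
    rintro x (rfl | rfl) <;> exact (ZMod.intCast_zmod_eq_zero_iff_dvd _ 22).mpr (by norm_num)
  · rintro ⟨m, n⟩ hmn
    obtain ⟨k, hk⟩ := (ZMod.intCast_zmod_eq_zero_iff_dvd (4 * m - n) 22).mp hmn
    have hdecomp : (m, n) = k • ((5 : ℤ), (-2 : ℤ)) + (m - 5 * k) • ((1 : ℤ), (4 : ℤ)) := by
      simp only [Prod.smul_mk, smul_eq_mul, Prod.mk_add_mk, Prod.mk.injEq]
      constructor <;> omega
    rw [hdecomp]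
    exact add_mem (zsmul_mem (AddSubgroup.subset_closure (by simp)) k)
      (zsmul_mem (AddSubgroup.subset_closure (by simp)) _)

lemma mem_closure_iff_dvd (m n : ℤ) :
    (m, n) ∈ AddSubgroup.closure {((5 : ℤ), (-2 : ℤ)), ((1 : ℤ), (4 : ℤ))} ↔
      (22 : ℤ) ∣ 4 * m - n := by
  rw [closure_eq_ker_colourMap, AddMonoidHom.mem_ker]
  exact ZMod.intCast_zmod_eq_zero_iff_dvd (4 * m - n) 22

lemma index_closure :
    (AddSubgroup.closure {((5 : ℤ), (-2 : ℤ)), ((1 : ℤ), (4 : ℤ))}).index = 22 := by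
  rw [closure_eq_ker_colourMap, AddSubgroup.index_ker,
    AddMonoidHom.range_eq_top.mpr colourMap_surjective, AddSubgroup.card_top, Nat.card_zmod]

lemma seventy_two_le_of_dvd {m n : ℤ} (hd : (22 : ℤ) ∣ 4 * m - n) (h0 : (m, n) ≠ (0, 0))
    (h1 : (m, n) ≠ (1, 4)) (h2 : (m, n) ≠ (-1, -4)) :
    72 ≤ (2 * m + n) ^ 2 + 2 * n ^ 2 := by
  by_contra! h
  have : -8 ≤ 2 * m + n ∧ 2 * m + n ≤ 8 := ⟨by nlinarith, by nlinarith⟩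
  obtain ⟨hn₁, hn₂⟩ : -5 ≤ n ∧ n ≤ 5 := ⟨by nlinarith, by nlinarith⟩
  obtain ⟨hm₁, hm₂⟩ : -6 ≤ m ∧ m ≤ 6 := by omega
  simp only [ne_eq, Prod.mk.injEq] at h0 h1 h2
  interval_cases m <;> interval_cases n <;> omega

end ColourLattice

section Plane

lemma pt_add (a b c d : ℝ) : pt a b + pt c d = pt (a + c) (b + d) := by
  ext i; fin_cases i <;> simp [pt]

lemma pt_sub (a b c d : ℝ) : pt a b - pt c d = pt (a - c) (b - d) := by
  ext i; fin_cases i <;> simp [pt]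

lemma pt_neg (a b : ℝ) : -pt a b = pt (-a) (-b) := by
  ext i; fin_cases i <;> simp [pt]

lemma norm_pt (a b : ℝ) : ‖pt a b‖ = √(a ^ 2 + b ^ 2) := by
  simp [pt, EuclideanSpace.norm_eq, Fin.sum_univ_two]

lemma inner_pt (a b c d : ℝ) : ⟪pt a b, pt c d⟫ = a * c + b * d := by
  simp [pt, PiLp.inner_apply, Fin.sum_univ_two, mul_comm]

end Plane

section Convex

variable {E : Type*} [NormedAddCommGroup E] [InnerProductSpace ℝ E]

lemma abs_inner_le_of_mem_convexHull {s : Set E} {u w : E} {c : ℝ}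
    (hs : ∀ v ∈ s, |⟪u, v⟫| ≤ c) (hw : w ∈ convexHull ℝ s) : |⟪u, w⟫| ≤ c := by
  have hconv : Convex ℝ {v : E | |⟪u, v⟫| ≤ c} := by
    simpa only [Set.preimage, Set.mem_Icc, abs_le, innerₛₗ_apply_apply] using
      (convex_Icc (-c) c).linear_preimage (innerₛₗ ℝ u)
  exact convexHull_min hs hconv hw

lemma le_norm_of_le_inner {u v : E} {d : ℝ} (hu : ‖u‖ ≤ 1) (h : d ≤ ⟪u, v⟫) : d ≤ ‖v‖ :=
  h.trans <| (real_inner_le_norm u v).trans <| mul_le_of_le_one_left (norm_nonneg v) hu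

end Convex

section Tiles

lemma sq_sqrt_two : √2 ^ 2 = 2 := Real.sq_sqrt zero_le_two

lemma center_sub_center (r : ℝ) (i j i' j' : ℤ) :
    center r i j - center r i' j' = center r (i - i') (j - j') := by
  simp only [center, pt_sub]
  congr 1 <;> push_cast <;> ring

lemma center_zero (r : ℝ) : center r 0 0 = 0 := by
  ext k; fin_cases k <;> simp [center, pt]

lemma center_neg (r : ℝ) (m n : ℤ) : center r (-m) (-n) = -center r m n := by
  simp only [center, pt_neg]
  congr 1 <;> push_cast <;> ring

lemma hexK_subset_closedBall {r : ℝ} (hr : r ^ 2 ≤ 1) :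
    hexK r ⊆ Metric.closedBall 0 (1 / 2) := by
  refine convexHull_min ?_ (convex_closedBall 0 _)
  have hx : √(1 - r ^ 2) ^ 2 = 1 - r ^ 2 := Real.sq_sqrt (by linarith)
  have hvert : ∀ a b : ℝ, a ^ 2 + b ^ 2 = 1 / 4 → pt a b ∈ Metric.closedBall (0 : Plane) (1 / 2) :=
    fun a b hab => by
      rw [mem_closedBall_zero_iff, norm_pt, hab, show (1 / 4 : ℝ) = (1 / 2) ^ 2 by norm_num,
        Real.sqrt_sq (by norm_num)]
  rintro v (rfl | rfl | rfl | rfl | rfl | rfl | rfl) <;> exact hvert _ _ (by nlinarith)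

lemma sqrt_one_sub_third_sq : √(1 - (1 / 3 : ℝ) ^ 2) / 2 = √2 / 3 := by
  rw [show (1 - (1 / 3 : ℝ) ^ 2) = (2 / 3) ^ 2 * 2 by norm_num, Real.sqrt_mul (by norm_num),
    Real.sqrt_sq (by norm_num)]
  ring

lemma hexK_third : hexK (1 / 3) = convexHull ℝ
    {pt 0 (1 / 2), pt (√2 / 3) (1 / 6), pt (√2 / 3) (-(1 / 6)),
      pt 0 (-(1 / 2)), pt (-(√2 / 3)) (-(1 / 6)), pt (-(√2 / 3)) (1 / 6)} := by
  rw [hexK, sqrt_one_sub_third_sq]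
  norm_num

lemma center_third (m n : ℤ) : center (1 / 3) m n = pt ((2 * m + n) * (√2 / 3)) (n * (2 / 3)) := by
  rw [center, sqrt_one_sub_third_sq]
  norm_num

lemma norm_center_third_sq (m n : ℤ) :
    ‖center (1 / 3) m n‖ ^ 2 = 2 / 9 * ((2 * m + n) ^ 2 + 2 * n ^ 2) := by
  rw [center_third, norm_pt, Real.sq_sqrt (by positivity)]
  linear_combination ((2 * m + n : ℝ) ^ 2 / 9) * sq_sqrt_two

noncomputable def separatingDir : Plane := pt (4 * √2 / 9) (7 / 9)

lemma norm_separatingDir : ‖separatingDir‖ = 1 := by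
  rw [separatingDir, norm_pt, ← Real.sqrt_one]
  congr 1
  linear_combination (16 / 81) * sq_sqrt_two

lemma abs_inner_separatingDir_le {w : Plane} (hw : w ∈ hexK (1 / 3)) :
    |⟪separatingDir, w⟫| ≤ 23 / 54 := by
  rw [hexK_third] at hw
  refine abs_inner_le_of_mem_convexHull ?_ hw
  rintro v (rfl | rfl | rfl | rfl | rfl | rfl | rfl) <;>
    · rw [separatingDir, inner_pt, abs_le]
      constructor <;> nlinarith [sq_sqrt_two]

lemma three_le_norm_of_far {m n : ℤ} (h : 72 ≤ (2 * m + n) ^ 2 + 2 * n ^ 2) {a b : Plane}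
    (ha : a ∈ hexK (1 / 3)) (hb : b ∈ hexK (1 / 3)) : 3 ≤ ‖center (1 / 3) m n + (a - b)‖ := by
  have hball := hexK_subset_closedBall (r := 1 / 3) (by norm_num)
  have ha' := mem_closedBall_zero_iff.mp (hball ha)
  have hb' := mem_closedBall_zero_iff.mp (hball hb)
  have hc : 4 ≤ ‖center (1 / 3) m n‖ := by
    refine abs_le_of_sq_le_sq' ?_ (norm_nonneg _) |>.2
    have h' : (72 : ℝ) ≤ (2 * m + n) ^ 2 + 2 * n ^ 2 := by exact_mod_cast h
    rw [norm_center_third_sq]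
    linarith
  linarith [norm_le_add_norm_add (center (1 / 3) m n) (a - b), norm_sub_le a b]

lemma three_le_norm_of_adjacent {a b : Plane} (ha : a ∈ hexK (1 / 3)) (hb : b ∈ hexK (1 / 3)) :
    3 ≤ ‖center (1 / 3) 1 4 + (a - b)‖ := by
  refine le_norm_of_le_inner norm_separatingDir.le ?_
  have hc : ⟪separatingDir, center (1 / 3) 1 4⟫ = 104 / 27 := by
    rw [center_third, separatingDir, inner_pt]
    push_cast
    linear_combination (8 / 9) * sq_sqrt_two
  have ha' := abs_le.mp (abs_inner_separatingDir_le ha)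
  have hb' := abs_le.mp (abs_inner_separatingDir_le hb)
  rw [inner_add_right, inner_sub_right, hc]
  linarith

end Tiles

lemma three_le_of_mem_sameColourDists {d : ℝ}
    (hd : d ∈ sameColourDists (1 / 3)
      (AddSubgroup.closure {((5 : ℤ), (-2 : ℤ)), ((1 : ℤ), (4 : ℤ))})) : 3 ≤ d := by
  obtain ⟨i, j, i', j', _, _, hne, hmem, ⟨a, ha, rfl⟩, ⟨b, hb, rfl⟩, rfl⟩ := hd
  have hsplit : center (1 / 3) i j + a - (center (1 / 3) i' j' + b)
      = center (1 / 3) (i - i') (j - j') + (a - b) := by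
    rw [← center_sub_center]; abel
  rw [dist_eq_norm, hsplit]
  rw [mem_closure_iff_dvd] at hmem
  by_cases h1 : (i - i', j - j') = (1, 4)
  · simp only [Prod.mk.injEq] at h1
    rw [h1.1, h1.2]
    exact three_le_norm_of_adjacent ha hb
  by_cases h2 : (i - i', j - j') = (-1, -4)
  · simp only [Prod.mk.injEq] at h2
    rw [h2.1, h2.2, center_neg, ← norm_neg, neg_add, neg_neg, neg_sub]
    exact three_le_norm_of_adjacent hb ha
  have h0 : (i - i', j - j') ≠ (0, 0) := by
    simp only [ne_eq, Prod.mk.injEq] at hne ⊢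
    omega
  exact three_le_norm_of_far (seventy_two_le_of_dvd hmem h0 h1 h2) ha hb

lemma three_mem_sameColourDists :
    3 ∈ sameColourDists (1 / 3)
      (AddSubgroup.closure {((5 : ℤ), (-2 : ℤ)), ((1 : ℤ), (4 : ℤ))}) := by
  have hw : pt (√2 / 3) (1 / 6) ∈ hexK (1 / 3) := hexK_third ▸ subset_convexHull ℝ _ (by simp)
  have hw' : -pt (√2 / 3) (1 / 6) ∈ hexK (1 / 3) :=
    hexK_third ▸ subset_convexHull ℝ _ (by simp [pt_neg])
  refine ⟨1, 4, 0, 0, _, _, by decide, (mem_closure_iff_dvd _ _).mpr (by norm_num),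
    ⟨_, hw', rfl⟩, ⟨_, hw, rfl⟩, ?_⟩
  dsimp only
  rw [center_zero, zero_add, dist_eq_norm, center_third, pt_neg, pt_add, pt_sub, norm_pt,
    ← Real.sqrt_sq (show (0 : ℝ) ≤ 3 by norm_num)]
  congr 1
  push_cast
  linear_combination (-16 / 9) * sq_sqrt_two

/-- with r = 1/3 and Λ = ⟨(5, -2), (1, 4)⟩ ≤ ℤ² of index 22,
the separation of the induced 22-colouring of the tiles T(i, j) equals the stated
value, and this value is attained. -/
theorem statement13 :
    (AddSubgroup.closure {(((5) : ℤ), ((-2) : ℤ)), (((1) : ℤ), ((4) : ℤ))}).index = 22 ∧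
    IsLeast
      (sameColourDists (1 / 3)
        (AddSubgroup.closure {(((5) : ℤ), ((-2) : ℤ)), (((1) : ℤ), ((4) : ℤ))}))
      ((3 : ℝ)) :=
  ⟨index_closure, three_mem_sameColourDists, fun _ hd => three_le_of_mem_sameColourDists hd⟩
end
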